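/- For θ ∈ ℝ let D(θ) = 3·(901 − 443072·θ(1−θ)) and define p(θ) ∈ ℝ⁴ by p(θ) = (0, 10(−3171 − 17332θ + 20640θ²)/D(θ), 10(137 − 23948θ + 20640θ²)/D(θ), (33043 − 916416·θ(1−θ))/D(θ)). Then for every θ ∈ [4961/10000, 1/2], all four coordinates of p(θ) are nonnegative and they sum to 1 (so p(θ) is a probability vector); moreover p(1/2) = (0, 110/543, 110/543, 323/543). -/

import Mathlib

/-- The Players' optimal correlated mixed strategy on the final θ-interval. -/
noncomputable def playersStrategy (θ : ℝ) : Fin 4 → ℝ :=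
  ![0,
    10 * (-3171 - 17332 * θ + 20640 * θ ^ 2) / (3 * (901 - 443072 * (θ * (1 - θ)))),
    10 * (137 - 23948 * θ + 20640 * θ ^ 2) / (3 * (901 - 443072 * (θ * (1 - θ)))),
    (33043 - 916416 * (θ * (1 - θ))) / (3 * (901 - 443072 * (θ * (1 - θ))))]

/-!
Everything is controlled by `u = θ (1 - θ)`: the numerators are
`10 (-20640 u + 3308 θ - 3171)`, `10 (-20640 u - 3308 θ + 137)` and `33043 - 916416 u`,
they add up to the denominator `3 (901 - 443072 u)`, and as soon as `u ≥ 33043 / 916416`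
(which forces `0 ≤ θ ≤ 1`) all of them are nonpositive and the denominator is negative.
On `[4961/10000, 1/2]` we have `u ≥ 1/4 - (39/10000)^2`, far above that threshold.
-/

theorem playersStrategy_sum_eq_one {θ : ℝ} (hD : 901 - 443072 * (θ * (1 - θ)) ≠ 0) :
    ∑ i, playersStrategy θ i = 1 := by
  have hD' : 3 * (901 - 443072 * (θ * (1 - θ))) ≠ 0 := mul_ne_zero three_ne_zero hD
  simp only [playersStrategy, Fin.sum_univ_four, Fin.isValue, Matrix.cons_val_zero,
    Matrix.cons_val_one, zero_add, Matrix.cons_val]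
  rw [← add_div, ← add_div, div_eq_one_iff_eq hD']
  ring

theorem playersStrategy_nonneg {θ : ℝ} (hθ : 33043 / 916416 ≤ θ * (1 - θ)) (i : Fin 4) :
    0 ≤ playersStrategy θ i := by
  have hθ₀ : 0 ≤ θ := by nlinarith
  have hθ₁ : θ ≤ 1 := by nlinarith
  have hD : 3 * (901 - 443072 * (θ * (1 - θ))) ≤ 0 := by linarith
  fin_cases i
  · exact le_rfl
  · exact div_nonneg_of_nonpos (by linarith) hD
  · exact div_nonneg_of_nonpos (by linarith) hD
  · exact div_nonneg_of_nonpos (by linarith) hD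

theorem le_mul_one_sub_of_mem_Icc {θ : ℝ} (hθ : θ ∈ Set.Icc (4961 / 10000 : ℝ) (1 / 2)) :
    33043 / 916416 ≤ θ * (1 - θ) := by
  nlinarith [hθ.1, hθ.2]

theorem playersStrategy_half : playersStrategy (1 / 2) = ![0, 110 / 543, 110 / 543, 323 / 543] := by
  ext i
  fin_cases i <;> norm_num [playersStrategy]

/-- For every `θ ∈ [0.4961, 1/2]`, `p(θ)` is a probability vector, and
`p(1/2) = (0, 110/543, 110/543, 323/543)`. -/
theorem playersStrategy_is_probability_vector :
    (∀ θ ∈ Set.Icc (4961 / 10000 : ℝ) (1 / 2),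
        (∀ i, 0 ≤ playersStrategy θ i) ∧ ∑ i, playersStrategy θ i = 1) ∧
      playersStrategy (1 / 2) = ![0, 110 / 543, 110 / 543, 323 / 543] := by
  refine ⟨fun θ hθ => ?_, playersStrategy_half⟩
  have hu := le_mul_one_sub_of_mem_Icc hθ
  exact ⟨playersStrategy_nonneg hu, playersStrategy_sum_eq_one (by linarith)⟩
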